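/- arXiv:1911.11246 — 2 statements merged into one kernel-verified Lean document; each statement's English description precedes it below -/
import Mathlib

section
/- For every odd integer n ≥ 1, the number of pairs (u,v) of odd integers with 1 ≤ u,v ≤ n-1 and 2u + v > 2n equals floor((n-1)/4) * floor((n-3)/4). -/
/-!
Write `n + 2` for the odd bound. Among the odd pairs counted for `n + 2`, those with `v ≠ n`
are exactly the pairs counted for `n` shifted by `u ↦ u + 2`, while those with `v = n` are
`(n + 2 - 2k, n)` for `1 ≤ k ≤ (n - 1) / 4`. Hence the count grows by `⌊(n - 1) / 4⌋` from
`n` to `n + 2`, and the product formula follows by induction.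
-/

open Finset

noncomputable def oddPairsAbove (n : ℤ) : Finset (ℤ × ℤ) :=
  (Icc 1 (n - 1) ×ˢ Icc 1 (n - 1)).filter fun p => Odd p.1 ∧ Odd p.2 ∧ 2 * p.1 + p.2 > 2 * n

namespace oddPairsAbove

variable {n : ℤ}

lemma card_filter_snd_ne (hn : Odd n) :
    ((oddPairsAbove (n + 2)).filter (·.2 ≠ n)).card = (oddPairsAbove n).card := by
  rw [Int.odd_iff] at hn
  refine card_nbij' (fun p => (p.1 - 2, p.2)) (fun p => (p.1 + 2, p.2)) ?_ ?_ ?_ ?_ <;>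
    · intro p hp
      simp only [oddPairsAbove, coe_filter, mem_filter, mem_product, mem_Icc, Int.odd_iff,
        Set.mem_ofPred_eq, Prod.ext_iff, and_true] at hp ⊢
      omega

lemma card_filter_snd_eq (hn : Odd n) (hn1 : 1 ≤ n) :
    (((oddPairsAbove (n + 2)).filter (·.2 = n)).card : ℤ) = (n - 1) / 4 := by
  rw [Int.odd_iff] at hn
  have hbij : ((oddPairsAbove (n + 2)).filter (·.2 = n)).card = (Icc 1 ((n - 1) / 4)).card := by
    refine card_nbij' (fun p => (n + 2 - p.1) / 2) (fun k => (n + 2 - 2 * k, n)) ?_ ?_ ?_ ?_ <;>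
      · intro p hp
        simp only [oddPairsAbove, coe_filter, coe_Icc, mem_filter, mem_product, mem_Icc,
          Int.odd_iff, Set.mem_ofPred_eq, Set.mem_Icc, Prod.ext_iff, and_true] at hp ⊢
        omega
  rw [hbij, Int.card_Icc]
  omega

lemma card_add_two (hn : Odd n) (hn1 : 1 ≤ n) :
    ((oddPairsAbove (n + 2)).card : ℤ) = (oddPairsAbove n).card + (n - 1) / 4 := by
  rw [← card_filter_add_card_filter_not (·.2 ≠ n), Nat.cast_add, card_filter_snd_ne hn]
  simp_rw [not_not, card_filter_snd_eq hn hn1]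

theorem card_eq (hn : Odd n) (hn1 : 1 ≤ n) :
    ((oddPairsAbove n).card : ℤ) = (n - 1) / 4 * ((n - 3) / 4) := by
  obtain ⟨m, rfl⟩ : ∃ m : ℕ, n = 2 * m + 1 := by
    obtain ⟨j, rfl⟩ := hn
    exact ⟨j.toNat, by omega⟩
  clear hn hn1
  induction m with
  | zero => rfl
  | succ m ih =>
    set n : ℤ := 2 * m + 1
    rw [show (2 * (m + 1 : ℕ) + 1 : ℤ) = n + 2 by push_cast; ring,
      card_add_two ⟨m, rfl⟩ (by omega), ih, show n + 2 - 1 = n + 1 by ring,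
      show n + 2 - 3 = n - 1 by ring, show (n + 1) / 4 = (n - 3) / 4 + 1 by omega]
    ring

end oddPairsAbove

theorem stmt_7 (n : ℤ) (hn : 1 ≤ n) (hodd : Odd n) :
    ((((Finset.Icc (1 : ℤ) (n - 1)) ×ˢ (Finset.Icc (1 : ℤ) (n - 1))).filter
        (fun p => Odd p.1 ∧ Odd p.2 ∧ 2 * p.1 + p.2 > 2 * n)).card : ℤ) =
      ⌊((n : ℚ) - 1) / 4⌋ * ⌊((n : ℚ) - 3) / 4⌋ := by
  rw [show ((n : ℚ) - 1) / 4 = ((n - 1 : ℤ) : ℚ) / ((4 : ℕ) : ℚ) by push_cast; rfl,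
    show ((n : ℚ) - 3) / 4 = ((n - 3 : ℤ) : ℚ) / ((4 : ℕ) : ℚ) by push_cast; rfl,
    Rat.floor_intCast_div_natCast, Rat.floor_intCast_div_natCast]
  exact oddPairsAbove.card_eq hodd hn
end

section
/- Let n > 1 and let f be a Littlewood polynomial of length n whose coefficients are independent random variables uniform on {1,-1}. Then E(‖f‖₄⁴) = 2n² - n. -/
open MeasureTheory

/-- The fourth power of the `L₄` norm of `f(z) = ∑_{j<n} a_j z^j` on the unit circle. -/
noncomputable def L4pow4 (n : ℕ) (a : ℕ → ℝ) : ℝ :=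
  (1 / (2 * Real.pi)) * ∫ θ in (0:ℝ)..(2 * Real.pi),
    (‖∑ j ∈ Finset.range n, (a j : ℂ) * Complex.exp ((θ : ℂ) * Complex.I) ^ j‖) ^ 4

/-- Extend a ±1 coefficient vector indexed by `Fin n` (given as Booleans) to `ℕ → ℝ`. -/
def signs (n : ℕ) (a : Fin n → Bool) : ℕ → ℝ :=
  fun j => if h : j < n then (if a ⟨j, h⟩ then 1 else -1) else 0

open Finset

/-!
Expanding `‖f(e^{iθ})‖⁴ = (f² · conj f²)(e^{iθ})` and integrating over the circle leaves exactly
the terms `a_j a_k a_l a_m` with `j + l = k + m`. Averaging over the signs kills every such term in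
which some index occurs once (flipping that sign is an involution negating the term); under
`j + l = k + m` the survivors are `j = k, l = m` and `j = m, k = l`, which number
`n² + n² - n` by inclusion–exclusion.
-/

theorem integral_cos_nat_sub_mul (p q : ℕ) :
    ∫ θ in (0:ℝ)..(2 * Real.pi), Real.cos (((p : ℝ) - q) * θ) =
      if p = q then 2 * Real.pi else 0 := by
  split_ifs with h
  · simp [h]
  · have hd : (p : ℝ) - q ≠ 0 := sub_ne_zero.mpr (Nat.cast_injective.ne h)
    rw [intervalIntegral.integral_comp_mul_left Real.cos hd, mul_zero, integral_cos,
      Real.sin_zero, sub_zero, smul_eq_mul,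
      show ((p : ℝ) - q) * (2 * Real.pi) = ((2 * ((p : ℤ) - q) : ℤ) : ℝ) * Real.pi by
        push_cast; ring,
      Real.sin_int_mul_pi, mul_zero]

theorem norm_sum_mul_exp_pow_pow_four (n : ℕ) (a : ℕ → ℝ) (θ : ℝ) :
    ‖∑ j ∈ range n, (a j : ℂ) * Complex.exp ((θ : ℂ) * Complex.I) ^ j‖ ^ 4 =
      ∑ j ∈ range n, ∑ k ∈ range n, ∑ l ∈ range n, ∑ m ∈ range n,
        a j * a k * a l * a m * Real.cos ((((j + l : ℕ) : ℝ) - (k + m : ℕ)) * θ) := by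
  set F := ∑ j ∈ range n, (a j : ℂ) * Complex.exp ((θ : ℂ) * Complex.I) ^ j
  have hF : ‖F‖ ^ 4 = (F ^ 2 * (starRingEnd ℂ) F ^ 2).re := by
    rw [← mul_pow, Complex.mul_conj, ← Complex.ofReal_pow, Complex.ofReal_re,
      Complex.normSq_eq_norm_sq]
    ring
  have hconj : (starRingEnd ℂ) F =
      ∑ k ∈ range n, (a k : ℂ) * Complex.exp (-((θ : ℂ) * Complex.I)) ^ k := by
    simp only [F, map_sum, map_mul, map_pow, Complex.conj_ofReal, ← Complex.exp_conj,
      Complex.conj_I, mul_neg]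
  have hexp : ∀ j k l m : ℕ,
      Complex.exp ((θ : ℂ) * Complex.I) ^ j * Complex.exp (-((θ : ℂ) * Complex.I)) ^ k *
        (Complex.exp ((θ : ℂ) * Complex.I) ^ l * Complex.exp (-((θ : ℂ) * Complex.I)) ^ m) =
      Complex.exp (((((j + l : ℕ) : ℝ) - (k + m : ℕ)) * θ : ℝ) * Complex.I) := by
    intro j k l m
    simp only [← Complex.exp_nat_mul, ← Complex.exp_add]
    congr 1
    push_cast
    ring
  rw [hF, hconj, sq, sq, sum_mul_sum, sum_mul_sum, sum_mul_sum]
  simp only [Complex.re_sum, sum_mul_sum]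
  refine sum_congr rfl fun j _ => sum_congr rfl fun k _ =>
    sum_congr rfl fun l _ => sum_congr rfl fun m _ => ?_
  rw [← Complex.exp_ofReal_mul_I_re, ← Complex.re_ofReal_mul, ← hexp]
  push_cast
  ring_nf

theorem L4pow4_eq_sum (n : ℕ) (a : ℕ → ℝ) :
    L4pow4 n a = ∑ j ∈ range n, ∑ k ∈ range n, ∑ l ∈ range n, ∑ m ∈ range n,
      if j + l = k + m then a j * a k * a l * a m else 0 := by
  have hπ : 2 * Real.pi ≠ 0 := by positivity
  simp (disch := intros; exact Continuous.intervalIntegrable (by fun_prop) _ _) only [L4pow4,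
    norm_sum_mul_exp_pow_pow_four, intervalIntegral.integral_finsetSum,
    intervalIntegral.integral_const_mul, integral_cos_nat_sub_mul, mul_sum, mul_ite, mul_zero,
    one_div_mul_eq_div, mul_div_cancel_right₀ _ hπ]

section signs

variable {n : ℕ}

theorem signs_mul_self (a : Fin n → Bool) {i : ℕ} (hi : i < n) :
    signs n a i * signs n a i = 1 := by
  unfold signs
  split_ifs <;> norm_num

theorem signs_update_of_ne (a : Fin n → Bool) {i : ℕ} (hi : i < n) (b : Bool) {x : ℕ}
    (hx : x ≠ i) : signs n (Function.update a ⟨i, hi⟩ b) x = signs n a x := by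
  by_cases h : x < n
  · have hne : (⟨x, h⟩ : Fin n) ≠ ⟨i, hi⟩ := fun e => hx (Fin.mk.inj e)
    simp [signs, h, Function.update_of_ne hne]
  · simp [signs, h]

theorem signs_update_not_self (a : Fin n → Bool) {i : ℕ} (hi : i < n) :
    signs n (Function.update a ⟨i, hi⟩ (!a ⟨i, hi⟩)) i = -signs n a i := by
  cases h : a ⟨i, hi⟩ <;> simp [signs, hi, h]

theorem sum_signs_mul_eq_zero {i : ℕ} (hi : i < n) (G : (Fin n → Bool) → ℝ)
    (hG : ∀ a b, G (Function.update a ⟨i, hi⟩ b) = G a) :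
    ∑ a : Fin n → Bool, signs n a i * G a = 0 := by
  have hflip : Function.Involutive fun a : Fin n → Bool =>
      Function.update a ⟨i, hi⟩ (!a ⟨i, hi⟩) := by
    intro a
    simp
  have h := Fintype.sum_equiv hflip.toPerm (fun a => signs n a i * G a)
    (fun a => -(signs n a i * G a)) fun a => by
      simp [signs_update_not_self, hG]
  rw [sum_neg_distrib] at h
  linarith

theorem sum_signs_mul_four {j k l m : ℕ} (hj : j < n) (hk : k < n) (hl : l < n) (hm : m < n)
    (h : j + l = k + m) :
    ∑ a : Fin n → Bool, signs n a j * signs n a k * signs n a l * signs n a m =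
      if (j = k ∧ l = m) ∨ (j = m ∧ k = l) then 2 ^ n else 0 := by
  split_ifs with hpair
  · have hone : ∀ a : Fin n → Bool,
        signs n a j * signs n a k * signs n a l * signs n a m = 1 := by
      intro a
      rcases hpair with ⟨rfl, rfl⟩ | ⟨rfl, rfl⟩
      · linear_combination
          (signs n a l * signs n a l) * signs_mul_self a hj + signs_mul_self a hl
      · linear_combination
          (signs n a k * signs n a k) * signs_mul_self a hj + signs_mul_self a hk
    simp [hone]
  · -- some index occurs exactly once: `j`, or else `k` (when `j = l`, so that `2j = k + m`)
    have hjk : j ≠ k := by omega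
    have hjm : j ≠ m := by omega
    by_cases hjl : j = l
    · subst hjl
      have hkm : k ≠ m := by omega
      simp_rw [show ∀ a : Fin n → Bool, signs n a j * signs n a k * signs n a j * signs n a m =
        signs n a k * (signs n a j * signs n a j * signs n a m) from fun a => by ring]
      exact sum_signs_mul_eq_zero hk _ fun a b => by
        simp only [signs_update_of_ne a hk b hjk, signs_update_of_ne a hk b hkm.symm]
    · simp_rw [show ∀ a : Fin n → Bool, signs n a j * signs n a k * signs n a l * signs n a m =
        signs n a j * (signs n a k * signs n a l * signs n a m) from fun a => by ring]
      exact sum_signs_mul_eq_zero hj _ fun a b => by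
        simp only [signs_update_of_ne a hj b (Ne.symm hjk),
          signs_update_of_ne a hj b (Ne.symm hjl), signs_update_of_ne a hj b (Ne.symm hjm)]

theorem sum_ite_add_eq_signs_mul_four {j k l m : ℕ} (hj : j < n) (hk : k < n) (hl : l < n)
    (hm : m < n) :
    ∑ a : Fin n → Bool,
        (if j + l = k + m then signs n a j * signs n a k * signs n a l * signs n a m else 0) =
      2 ^ n * if (j = k ∧ l = m) ∨ (j = m ∧ k = l) then 1 else 0 := by
  by_cases hc : j + l = k + m
  · simp only [hc, if_true, sum_signs_mul_four hj hk hl hm hc, mul_ite, mul_one, mul_zero]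
  · have hpair : ¬((j = k ∧ l = m) ∨ (j = m ∧ k = l)) := by omega
    simp only [hc, hpair, if_false, sum_const_zero, mul_zero]

end signs

theorem sum_range_pairing_indicator (n : ℕ) :
    ∑ j ∈ range n, ∑ k ∈ range n, ∑ l ∈ range n, ∑ m ∈ range n,
      (if (j = k ∧ l = m) ∨ (j = m ∧ k = l) then (1 : ℝ) else 0) = 2 * (n : ℝ) ^ 2 - n := by
  have hsplit : ∀ j k l m : ℕ, (if (j = k ∧ l = m) ∨ (j = m ∧ k = l) then (1 : ℝ) else 0) =
      (if j = k ∧ l = m then 1 else 0) + (if j = m ∧ k = l then 1 else 0) -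
        (if j = k ∧ k = l ∧ l = m then 1 else 0) := by
    intro j k l m
    split_ifs <;> first | (exfalso; omega) | norm_num
  simp only [sum_range, Fin.val_inj, hsplit]
  simp [sum_add_distrib, sum_sub_distrib, ite_and]
  ring

theorem stmt_12_general (n : ℕ) :
    (1 / 2 ^ n : ℝ) * ∑ a : Fin n → Bool, L4pow4 n (signs n a) =
      2 * (n : ℝ) ^ 2 - n := by
  calc (1 / 2 ^ n : ℝ) * ∑ a : Fin n → Bool, L4pow4 n (signs n a)
      = (1 / 2 ^ n : ℝ) * ∑ j ∈ range n, ∑ k ∈ range n, ∑ l ∈ range n, ∑ m ∈ range n,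
          ∑ a : Fin n → Bool, (if j + l = k + m then
            signs n a j * signs n a k * signs n a l * signs n a m else 0) := by
        simp only [L4pow4_eq_sum, sum_comm (s := (univ : Finset (Fin n → Bool)))]
    _ = ∑ j ∈ range n, ∑ k ∈ range n, ∑ l ∈ range n, ∑ m ∈ range n,
          (if (j = k ∧ l = m) ∨ (j = m ∧ k = l) then (1 : ℝ) else 0) := by
        simp only [sum_congr rfl fun j hj => sum_congr rfl fun k hk => sum_congr rfl
          fun l hl => sum_congr rfl fun m hm => sum_ite_add_eq_signs_mul_four (mem_range.mp hj)
            (mem_range.mp hk) (mem_range.mp hl) (mem_range.mp hm), ← mul_sum]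
        field_simp
    _ = 2 * (n : ℝ) ^ 2 - n := sum_range_pairing_indicator n

/-- For `f` drawn uniformly at random from the Littlewood polynomials of length `n`,
`E(‖f‖₄⁴) = 2n² - n`. -/
theorem stmt_12 (n : ℕ) (hn : 1 < n) :
    (1 / 2 ^ n : ℝ) * ∑ a : Fin n → Bool, L4pow4 n (signs n a) =
      2 * (n : ℝ) ^ 2 - n :=
  stmt_12_general n
end
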